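/- Let ρ be a 2×2 density matrix with det ρ > 0 (equivalently, ρ is positive definite, hence mixed), and let P be a rank-one orthogonal projection (a pure state). For x ∈ [0,1] define the hedged state σ_x = (1−x)·P + (x/2)·I. Then there exists ε > 0 such that for all x with 0 < x < ε, the root fidelity satisfies Tr √(√ρ σ_x √ρ) > Tr √(√ρ P √ρ). (In words: moving a pure estimate slightly toward the maximally mixed state strictly increases its fidelity with any fixed mixed true state, so a pure state cannot maximize fidelity against a mixed state.) -/

import Mathlib

/-!
For a `2 × 2` positive semidefinite `M`, `(Tr √M)² = Tr M + 2 √(det M)`, hence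
`√F(ρ, σ)² = Tr(ρσ) + 2 √(det ρ · det σ)`. For the pure state `P` the determinant term
vanishes, while `det σₓ ≈ x / 2`: hedging gains `2 √(det ρ · x / 2)`, of order `√x`, in the
determinant term and loses only `x (Tr ρP - 1/2) ≤ x / 2` in the trace term.
-/

open Matrix MeasureTheory
open scoped ComplexOrder Classical

/-- A density matrix of dimension `d`: a complex `d × d` positive semidefinite matrix
of trace 1. -/
def IsDensityMatrix {d : ℕ} (ρ : Matrix (Fin d) (Fin d) ℂ) : Prop :=
  ρ.PosSemidef ∧ ρ.trace = 1

/-- A pure state: a density matrix that is a rank-one orthogonal projection,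
i.e. it satisfies `ρ * ρ = ρ` and has rank one. -/
def IsPureState {d : ℕ} (ρ : Matrix (Fin d) (Fin d) ℂ) : Prop :=
  IsDensityMatrix ρ ∧ ρ * ρ = ρ ∧ ρ.rank = 1

/-- The positive semidefinite square root `√A` of a positive semidefinite matrix,
extended to a total function (junk value `0` on non-PSD matrices). -/
noncomputable def psqrt {d : ℕ} (A : Matrix (Fin d) (Fin d) ℂ) :
    Matrix (Fin d) (Fin d) ℂ :=
  if h : A.PosSemidef then
    h.1.eigenvectorUnitary.1 * diagonal ((↑) ∘ (√·) ∘ h.1.eigenvalues) *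
      (star h.1.eigenvectorUnitary : Matrix (Fin d) (Fin d) ℂ)
  else 0

/-- The root fidelity `√F(ρ,σ) = Tr √(√ρ σ √ρ)` (a real number, taken as the real part
of the trace, which is real for density matrices). -/
noncomputable def rootFidelity {d : ℕ} (ρ σ : Matrix (Fin d) (Fin d) ℂ) : ℝ :=
  ((psqrt (psqrt ρ * σ * psqrt ρ)).trace).re

open Unitary in
lemma psqrt_of_posSemidef {d : ℕ} {A : Matrix (Fin d) (Fin d) ℂ} (hA : A.PosSemidef) :
    psqrt A = conjStarAlgAut ℂ _ hA.1.eigenvectorUnitary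
      (diagonal ((↑) ∘ (√·) ∘ hA.1.eigenvalues)) := by
  rw [psqrt, dif_pos hA, conjStarAlgAut_apply]

lemma posSemidef_psqrt {d : ℕ} (A : Matrix (Fin d) (Fin d) ℂ) : (psqrt A).PosSemidef := by
  by_cases hA : A.PosSemidef
  · rw [psqrt_of_posSemidef hA, Unitary.conjStarAlgAut_apply, star_eq_conjTranspose]
    exact (posSemidef_diagonal_iff.2 fun i => by simp).mul_mul_conjTranspose_same _
  · rw [psqrt, dif_neg hA]
    exact .zero

lemma psqrt_mul_self {d : ℕ} {A : Matrix (Fin d) (Fin d) ℂ} (hA : A.PosSemidef) :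
    psqrt A * psqrt A = A := by
  conv_rhs => rw [hA.1.spectral_theorem]
  rw [psqrt_of_posSemidef hA, ← map_mul, diagonal_mul_diagonal]
  congr 2
  ext i
  simp [← Complex.ofReal_mul, Real.mul_self_sqrt (hA.eigenvalues_nonneg i)]

lemma posSemidef_psqrt_mul_mul_psqrt {d : ℕ} (ρ : Matrix (Fin d) (Fin d) ℂ)
    {A : Matrix (Fin d) (Fin d) ℂ} (hA : A.PosSemidef) :
    (psqrt ρ * A * psqrt ρ).PosSemidef := by
  simpa [(posSemidef_psqrt ρ).1.eq] using hA.mul_mul_conjTranspose_same (psqrt ρ)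

lemma Matrix.PosSemidef.trace_mul_nonneg {d : ℕ} {A B : Matrix (Fin d) (Fin d) ℂ}
    (hA : A.PosSemidef) (hB : B.PosSemidef) : 0 ≤ (A * B).trace := by
  rw [← psqrt_mul_self hA, ← trace_mul_cycle]
  exact (posSemidef_psqrt_mul_mul_psqrt A hB).trace_nonneg

lemma Matrix.IsHermitian.posSemidef_of_mul_self_eq {n 𝕜 : Type*} [Fintype n] [RCLike 𝕜]
    {P : Matrix n n 𝕜} (hP : P.IsHermitian) (hP2 : P * P = P) : P.PosSemidef := by
  simpa [hP.eq, hP2] using posSemidef_conjTranspose_mul_self P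

lemma IsDensityMatrix.re_trace_mul_mem_Icc_of_isHermitian_of_mul_self_eq {d : ℕ}
    {ρ P : Matrix (Fin d) (Fin d) ℂ} (hρ : IsDensityMatrix ρ) (hP : P.IsHermitian)
    (hP2 : P * P = P) : (ρ * P).trace.re ∈ Set.Icc 0 1 := by
  have hPcompl : (1 - P).PosSemidef :=
    (isHermitian_one.sub hP).posSemidef_of_mul_self_eq (by simp [sub_mul, mul_sub, hP2])
  refine ⟨(Complex.nonneg_iff.1 (hρ.1.trace_mul_nonneg (hP.posSemidef_of_mul_self_eq hP2))).1, ?_⟩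
  simpa [Matrix.mul_sub, hρ.2] using (Complex.nonneg_iff.1 (hρ.1.trace_mul_nonneg hPcompl)).1

lemma Matrix.trace_sq_fin_two (A : Matrix (Fin 2) (Fin 2) ℂ) :
    A.trace ^ 2 = (A * A).trace + 2 * A.det := by
  simp only [trace_fin_two, det_fin_two, mul_apply, Fin.sum_univ_two]
  ring

lemma Matrix.det_smul_add_smul_one_fin_two (a c : ℂ) (A : Matrix (Fin 2) (Fin 2) ℂ) :
    (a • A + c • 1).det = a ^ 2 * A.det + a * c * A.trace + c ^ 2 := by
  simp only [det_fin_two, trace_fin_two, add_apply, smul_apply, smul_eq_mul, one_apply_eq,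
    one_apply_ne zero_ne_one, one_apply_ne one_ne_zero, mul_one, mul_zero, add_zero]
  ring

lemma Matrix.det_eq_zero_of_mul_self_eq_of_trace_eq_one_fin_two {P : Matrix (Fin 2) (Fin 2) ℂ}
    (hP2 : P * P = P) (hPtr : P.trace = 1) : P.det = 0 := by
  have h := trace_sq_fin_two P
  rw [hP2, hPtr] at h
  linear_combination -h / 2

lemma re_trace_psqrt_fin_two {M : Matrix (Fin 2) (Fin 2) ℂ} (hM : M.PosSemidef) :
    (psqrt M).trace.re = √(M.trace.re + 2 * √M.det.re) := by
  have hS := posSemidef_psqrt M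
  obtain ⟨a, ha, hSa⟩ : ∃ a : ℝ, 0 ≤ a ∧ (a : ℂ) = (psqrt M).trace :=
    RCLike.nonneg_iff_exists_ofReal.1 hS.trace_nonneg
  obtain ⟨b, hb, hSb⟩ : ∃ b : ℝ, 0 ≤ b ∧ (b : ℂ) = (psqrt M).det :=
    RCLike.nonneg_iff_exists_ofReal.1 hS.det_nonneg
  have htr : M.trace = ((a ^ 2 - 2 * b : ℝ) : ℂ) := by
    have h := trace_sq_fin_two (psqrt M)
    rw [psqrt_mul_self hM, ← hSa, ← hSb] at h
    push_cast
    linear_combination -h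
  have hdet : M.det = ((b ^ 2 : ℝ) : ℂ) := by
    rw [← psqrt_mul_self hM, det_mul, ← hSb]
    push_cast
    ring
  simp only [← hSa, htr, hdet, Complex.ofReal_re]
  rw [Real.sqrt_sq hb, sub_add_cancel, Real.sqrt_sq ha]

lemma rootFidelity_fin_two {ρ A : Matrix (Fin 2) (Fin 2) ℂ} (hρ : ρ.PosSemidef)
    (hA : A.PosSemidef) :
    rootFidelity ρ A = √((ρ * A).trace.re + 2 * √(ρ.det * A.det).re) := by
  rw [rootFidelity, re_trace_psqrt_fin_two (posSemidef_psqrt_mul_mul_psqrt ρ hA),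
    trace_mul_cycle, det_mul, det_mul, mul_right_comm, ← det_mul, psqrt_mul_self hρ]

lemma lt_one_sub_mul_add_half_add_two_sqrt {t d x : ℝ} (ht : t ≤ 1) (hx : 0 < x) (hxd : x < d)
    (hx1 : x < 1) : t < (1 - x) * t + x / 2 + 2 * √(d * (x / 2 * (1 - x / 2))) := by
  have : x / 4 < √(d * (x / 2 * (1 - x / 2))) := by
    rw [Real.lt_sqrt (by positivity)]
    nlinarith [mul_pos (mul_pos (hx.trans hxd) hx) (sub_pos.2 hx1), mul_pos (sub_pos.2 hxd) hx]
  nlinarith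

/-- Let `ρ` be a `2 × 2` density matrix with `det ρ > 0` (i.e. positive
definite, hence mixed) and `P` a rank-one orthogonal projection (a pure state). For
`x ∈ [0,1]` let `σ_x = (1 − x) P + (x/2) I` be the hedged state. Then there is `ε > 0`
such that for all `0 < x < ε`, `Tr √(√ρ σ_x √ρ) > Tr √(√ρ P √ρ)`: moving a pure estimate
slightly toward the maximally mixed state strictly increases fidelity with the mixed
true state. -/
theorem hedging_pure_estimate_increases_fidelity
    (ρ : Matrix (Fin 2) (Fin 2) ℂ) (hρ : IsDensityMatrix ρ) (hdet : 0 < ρ.det.re)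
    (P : Matrix (Fin 2) (Fin 2) ℂ)
    (hP2 : P * P = P) (hPherm : P.IsHermitian) (hPtr : P.trace = 1)
    (σ : ℝ → Matrix (Fin 2) (Fin 2) ℂ)
    (hσ : ∀ x : ℝ,
      σ x = (1 - (x : ℂ)) • P + ((x : ℂ) / 2) • (1 : Matrix (Fin 2) (Fin 2) ℂ)) :
    ∃ ε > 0, ∀ x : ℝ, 0 < x → x < ε → rootFidelity ρ P < rootFidelity ρ (σ x) := by
  obtain ⟨ht0, ht1⟩ := hρ.re_trace_mul_mem_Icc_of_isHermitian_of_mul_self_eq hPherm hP2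
  obtain ⟨hρpsd, hρtr⟩ := hρ
  have hPpsd := hPherm.posSemidef_of_mul_self_eq hP2
  have hPdet := det_eq_zero_of_mul_self_eq_of_trace_eq_one_fin_two hP2 hPtr
  set t := (ρ * P).trace.re
  refine ⟨min ρ.det.re 1, lt_min hdet one_pos, fun x hx hxε => ?_⟩
  have hσpsd : (σ x).PosSemidef := by
    rw [hσ x]
    refine (hPpsd.smul ?_).add (PosSemidef.one.smul ?_) <;>
      norm_cast <;> linarith [hxε.trans_le (min_le_right _ _)]
  have hfidP : rootFidelity ρ P = √t := by
    simp [rootFidelity_fin_two hρpsd hPpsd, hPdet, t]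
  have hfidσ : rootFidelity ρ (σ x) =
      √((1 - x) * t + x / 2 + 2 * √(ρ.det.re * (x / 2 * (1 - x / 2)))) := by
    have hdetσ : (σ x).det = ((x / 2 * (1 - x / 2) : ℝ) : ℂ) := by
      rw [hσ x, det_smul_add_smul_one_fin_two, hPdet, hPtr]
      push_cast
      ring
    rw [rootFidelity_fin_two hρpsd hσpsd, hdetσ, Complex.re_mul_ofReal, hσ x]
    simp [Matrix.mul_add, hρtr, t]
  rw [hfidP, hfidσ]
  exact Real.sqrt_lt_sqrt ht0 (lt_one_sub_mul_add_half_add_two_sqrt ht1 hx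
    (hxε.trans_le (min_le_left _ _)) (hxε.trans_le (min_le_right _ _)))
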